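/- arXiv:2211.02018 — 4 statements merged into one kernel-verified Lean document; each statement's English description precedes it below -/
import Mathlib

section
/- Let y, c, ε > 0. If D ≥ (2ε²/(2ε² + c)) (y⁴ + 2ε² + c) then 2ε² y / D ≤ y(2ε² + c)/(y⁴ + 2ε² + c) < (2ε² + c)^{1/4}. -/
theorem L4_denominator_bound (y c ε D : ℝ) (hy : 0 < y) (hc : 0 < c) (hε : 0 < ε)
    (hD : (2 * ε ^ 2 / (2 * ε ^ 2 + c)) * (y ^ 4 + 2 * ε ^ 2 + c) ≤ D) :
    2 * ε ^ 2 * y / D ≤ y * (2 * ε ^ 2 + c) / (y ^ 4 + 2 * ε ^ 2 + c) ∧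
    y * (2 * ε ^ 2 + c) / (y ^ 4 + 2 * ε ^ 2 + c) < (2 * ε ^ 2 + c) ^ ((1 : ℝ) / 4) := by
  have hα : (0:ℝ) < 2 * ε ^ 2 + c := by positivity
  have hden : (0:ℝ) < y ^ 4 + 2 * ε ^ 2 + c := by positivity
  have hε2 : (0:ℝ) < 2 * ε ^ 2 := by positivity
  have hDpos : 0 < D :=
    lt_of_lt_of_le (by positivity) hD
  have hD' : 2 * ε ^ 2 * (y ^ 4 + 2 * ε ^ 2 + c) ≤ (2 * ε ^ 2 + c) * D := by
    have := mul_le_mul_of_nonneg_left hD hα.le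
    field_simp at this
    nlinarith [this]
  constructor
  · rw [div_le_div_iff₀ hDpos hden]
    nlinarith [mul_le_mul_of_nonneg_left hD' hy.le]
  · set t := (2 * ε ^ 2 + c) ^ ((1:ℝ)/4) with ht_def
    have ht : 0 < t := Real.rpow_pos_of_pos hα _
    have ht4 : t ^ 4 = 2 * ε ^ 2 + c := by
      rw [ht_def, ← Real.rpow_natCast ((2 * ε ^ 2 + c) ^ ((1:ℝ)/4)) 4,
        ← Real.rpow_mul hα.le]
      norm_num
    rw [div_lt_iff₀ hden]
    nlinarith [sq_nonneg (t - y), sq_nonneg (t + y), sq_nonneg (t^2 - y^2),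
      sq_nonneg (t^2 - t*y), sq_nonneg (t*y), mul_pos ht hy, ht4,
      mul_pos (mul_pos ht ht) (mul_pos ht hy)]
end

section
/- Let b_{j}^{(n)} be the variable-step BDF2 kernels and define the DCC kernels p by Σ_{j=k}^{n} p_{n−j}^{(n)} b_{j−k}^{(j)} = 1 for all 1 ≤ k ≤ n. Then p_{n−j}^{(n)} = Σ_{l=j}^{n} θ_{l−j}^{(l)} and θ_{n−j}^{(n)} = p_{n−j}^{(n)} − p_{n−1−j}^{(n−1)} for 1 ≤ j ≤ n, where θ are the DOC kernels and p_{−1}^{(n)} := 0. -/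
/-!
Both `p n ·` and the partial sums `j ↦ ∑_{l=j}^{n} θ_{l-j}^{(l)}` solve the lower-triangular
system `∑_{j=k}^{n} x_j b_{j-k}^{(j)} = 1` (`1 ≤ k ≤ n`): for the partial sums, exchanging the
order of summation reduces the system to the orthogonality identity of the DOC kernels.
The BDF2 diagonal `b_0^{(k)}` is positive, so the solution is unique, which gives the first
identity; the second is the difference of two consecutive partial sums.
-/

open Finset

theorem eq_zero_of_sum_Icc_mul_eq_zero {R : Type*} [Semiring R] [NoZeroDivisors R]
    {a n : ℕ} {x : ℕ → R} {b : ℕ → ℕ → R} (hdiag : ∀ k ∈ Icc a n, b k k ≠ 0)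
    (hx : ∀ k ∈ Icc a n, ∑ j ∈ Icc k n, x j * b j k = 0) :
    ∀ k ∈ Icc a n, x k = 0 := by
  intro k hk
  induction hnk : n - k using Nat.strong_induction_on generalizing k with
  | _ m ih =>
    rw [mem_Icc] at hk
    have hrest : ∑ j ∈ Ioc k n, x j * b j k = 0 := sum_eq_zero fun j hj => by
      rw [mem_Ioc] at hj
      rw [ih (n - j) (by omega) j (mem_Icc.2 ⟨by omega, hj.2⟩) rfl, zero_mul]
    have hk_row := hx k (mem_Icc.2 hk)
    rw [← add_sum_Ioc_eq_sum_Icc hk.2, hrest, add_zero] at hk_row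
    exact (mul_eq_zero.1 hk_row).resolve_right (hdiag k (mem_Icc.2 hk))

theorem sum_Icc_sum_Icc_mul_eq_one {R : Type*} [Semiring R] {θ b : ℕ → ℕ → R} {k n : ℕ}
    (hθ : ∀ l ∈ Icc k n, ∑ j ∈ Icc k l, θ l j * b j k = if l = k then 1 else 0)
    (hkn : k ≤ n) :
    ∑ j ∈ Icc k n, (∑ l ∈ Icc j n, θ l j) * b j k = 1 := by
  simp_rw [sum_mul]
  rw [sum_comm' (t' := Icc k n) (s' := fun l => Icc k l)
    (fun j l => by simp only [mem_Icc]; omega), sum_congr rfl hθ, sum_ite_eq']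
  simp [hkn]

theorem bdf2_diag_pos {τ r : ℕ → ℝ} {b : ℕ → ℕ → ℝ} (hτ : ∀ n, 1 ≤ n → 0 < τ n)
    (hr : ∀ n, 2 ≤ n → r n = τ n / τ (n - 1)) (hb11 : b 1 1 = 1 / τ 1)
    (hb0 : ∀ n, 2 ≤ n → b n n = (1 + 2 * r n) / (τ n * (1 + r n)))
    {k : ℕ} (hk : 1 ≤ k) : 0 < b k k := by
  obtain rfl | hk2 := hk.eq_or_lt
  · rw [hb11]
    exact one_div_pos.2 (hτ 1 le_rfl)
  · have hτk := hτ k hk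
    have hrk : 0 < r k := by
      rw [hr k hk2]
      exact div_pos hτk (hτ (k - 1) (by omega))
    rw [hb0 k hk2]
    positivity

theorem dcc_doc_relation_general (τ : ℕ → ℝ) (hτ : ∀ n, 1 ≤ n → 0 < τ n)
    (r : ℕ → ℝ) (hr : ∀ n, 2 ≤ n → r n = τ n / τ (n - 1))
    (b : ℕ → ℕ → ℝ)
    (hb11 : b 1 1 = 1 / τ 1)
    (hb0 : ∀ n, 2 ≤ n → b n n = (1 + 2 * r n) / (τ n * (1 + r n)))
    (θ : ℕ → ℕ → ℝ)
    (hθ : ∀ k n, 1 ≤ k → k ≤ n →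
      ∑ j ∈ Icc k n, θ n j * b j k = if n = k then 1 else 0)
    (p : ℕ → ℕ → ℝ)
    (hp : ∀ k n, 1 ≤ k → k ≤ n → ∑ j ∈ Icc k n, p n j * b j k = 1)
    (hpneg : ∀ n, p n (n + 1) = 0) :
    ∀ j n, 1 ≤ j → j ≤ n →
      p n j = (∑ l ∈ Icc j n, θ l j) ∧ θ n j = p n j - p (n - 1) j := by
  have hp_eq : ∀ m i, 1 ≤ i → i ≤ m + 1 → p m i = ∑ l ∈ Icc i m, θ l i := by
    intro m i hi him
    obtain rfl | him := him.eq_or_lt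
    · simp [hpneg]
    refine sub_eq_zero.1 (eq_zero_of_sum_Icc_mul_eq_zero (a := 1) (n := m)
      (x := fun j => p m j - ∑ l ∈ Icc j m, θ l j)
      (fun k hk => (bdf2_diag_pos hτ hr hb11 hb0 (mem_Icc.1 hk).1).ne')
      (fun k hk => ?_) i (mem_Icc.2 ⟨hi, by omega⟩))
    obtain ⟨hk1, hkm⟩ := mem_Icc.1 hk
    simp_rw [sub_mul]
    rw [sum_sub_distrib, hp k m hk1 hkm,
      sum_Icc_sum_Icc_mul_eq_one (fun l hl => hθ k l hk1 (mem_Icc.1 hl).1) hkm, sub_self]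
  intro j n hj hjn
  obtain ⟨m, rfl⟩ : ∃ m, n = m + 1 := ⟨n - 1, by omega⟩
  refine ⟨hp_eq _ j hj (by omega), ?_⟩
  rw [Nat.add_sub_cancel, hp_eq _ j hj (by omega), hp_eq m j hj hjn,
    sum_Icc_succ_top (by omega)]
  ring

/-- Relations between the DCC kernels `p` (defined by the all-ones identity (4.42)) and
the DOC kernels `θ` (defined by the orthogonality identity (3.23)) for the variable-step
BDF2 kernels `b`. Here `b j k = b_{j-k}^{(j)}`, `θ n j = θ_{n-j}^{(n)}`,
`p n j = p_{n-j}^{(n)}`, with the convention `p_{-1}^{(n)} = 0`, i.e. `p n (n+1) = 0`. -/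
theorem dcc_doc_relation (τ : ℕ → ℝ) (hτ : ∀ n, 1 ≤ n → 0 < τ n)
    (r : ℕ → ℝ) (hr : ∀ n, 2 ≤ n → r n = τ n / τ (n - 1))
    (b : ℕ → ℕ → ℝ)
    (hb11 : b 1 1 = 1 / τ 1)
    (hb0 : ∀ n, 2 ≤ n → b n n = (1 + 2 * r n) / (τ n * (1 + r n)))
    (hb1 : ∀ n, 2 ≤ n → b n (n - 1) = -(r n) ^ 2 / (τ n * (1 + r n)))
    (hbz : ∀ n k, k + 2 ≤ n → b n k = 0)
    (θ : ℕ → ℕ → ℝ)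
    (hθ : ∀ k n, 1 ≤ k → k ≤ n →
      ∑ j ∈ Icc k n, θ n j * b j k = if n = k then 1 else 0)
    (p : ℕ → ℕ → ℝ)
    (hp : ∀ k n, 1 ≤ k → k ≤ n → ∑ j ∈ Icc k n, p n j * b j k = 1)
    (hpneg : ∀ n, p n (n + 1) = 0) :
    ∀ j n, 1 ≤ j → j ≤ n →
      p n j = (∑ l ∈ Icc j n, θ l j) ∧ θ n j = p n j - p (n - 1) j :=
  dcc_doc_relation_general τ hτ r hr b hb11 hb0 θ hθ p hp hpneg
end

section
/- The DCC kernels satisfy Σ_{j=1}^{n} p_{n−j}^{(n)} = tₙ, where tₙ = Σ_{k=1}^{n} τₖ. -/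
/-!
The BDF2 kernels act on increments: `∑_{k ≤ j} b_{j,k} τ_k` is `D₂` applied to `t_k`, which is `1`
because BDF2 is exact on linear functions. Inserting this factor `1` into `∑_j p_{n,j}` and
exchanging the two sums over the triangle `1 ≤ k ≤ j ≤ n` turns the inner sums into the DCC
identities `∑_{j ≥ k} p_{n,j} b_{j,k} = 1`, leaving `∑_k τ_k = t_n`.
-/

open Finset

theorem bdf2_exact_on_linear {τ₁ τ₂ r : ℝ} (h₁ : 0 < τ₁) (h₂ : 0 < τ₂) (hr : r = τ₂ / τ₁) :
    -r ^ 2 / (τ₂ * (1 + r)) * τ₁ + (1 + 2 * r) / (τ₂ * (1 + r)) * τ₂ = 1 := by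
  subst hr
  have : 0 < 1 + τ₂ / τ₁ := by positivity
  field_simp
  ring

theorem sum_Icc_one_eq_add_of_eq_zero {M : Type*} [AddCommMonoid M] (f : ℕ → M) (m : ℕ)
    (hf : ∀ k ≤ m, f k = 0) : ∑ k ∈ Icc 1 (m + 2), f k = f (m + 1) + f (m + 2) := by
  rw [sum_Icc_succ_top (by omega), sum_Icc_succ_top (by omega),
    sum_eq_zero fun k hk => hf k (mem_Icc.mp hk).2, zero_add]

theorem sum_mul_sum_Icc_eq_sum_of_dcc {R : Type*} [CommSemiring R] (b : ℕ → ℕ → R)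
    (p v : ℕ → R) (n : ℕ) (hp : ∀ k ∈ Icc 1 n, ∑ j ∈ Icc k n, p j * b j k = 1) :
    ∑ j ∈ Icc 1 n, p j * ∑ k ∈ Icc 1 j, b j k * v k = ∑ k ∈ Icc 1 n, v k := calc
  _ = ∑ j ∈ Icc 1 n, ∑ k ∈ Icc 1 j, p j * b j k * v k := by simp_rw [mul_sum, mul_assoc]
  _ = ∑ k ∈ Icc 1 n, ∑ j ∈ Icc k n, p j * b j k * v k :=
    sum_comm' fun j k => by simp only [mem_Icc]; omega
  _ = ∑ k ∈ Icc 1 n, v k := sum_congr rfl fun k hk => by rw [← sum_mul, hp k hk, one_mul]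

/-- Proposition 4.1 (first part): the DCC kernels sum to the time level,
`Σ_{j=1}^n p_{n-j}^{(n)} = t_n = Σ_{k=1}^n τ_k`. -/
theorem dcc_sum (τ : ℕ → ℝ) (hτ : ∀ n, 1 ≤ n → 0 < τ n)
    (r : ℕ → ℝ) (hr : ∀ n, 2 ≤ n → r n = τ n / τ (n - 1))
    (b : ℕ → ℕ → ℝ)
    (hb11 : b 1 1 = 1 / τ 1)
    (hb0 : ∀ n, 2 ≤ n → b n n = (1 + 2 * r n) / (τ n * (1 + r n)))
    (hb1 : ∀ n, 2 ≤ n → b n (n - 1) = -(r n) ^ 2 / (τ n * (1 + r n)))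
    (hbz : ∀ n k, k + 2 ≤ n → b n k = 0)
    (p : ℕ → ℕ → ℝ)
    (hp : ∀ k n, 1 ≤ k → k ≤ n → ∑ j ∈ Icc k n, p n j * b j k = 1) :
    ∀ n, 1 ≤ n → ∑ j ∈ Icc 1 n, p n j = ∑ k ∈ Icc 1 n, τ k := by
  have bdf2_time : ∀ j, 1 ≤ j → ∑ k ∈ Icc 1 j, b j k * τ k = 1 := by
    intro j hj
    rcases j with _ | _ | m
    · omega
    · simp [hb11, (hτ 1 le_rfl).ne']
    · have hb1' := hb1 (m + 2) (by omega)
      rw [show m + 2 - 1 = m + 1 by omega] at hb1'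
      rw [sum_Icc_one_eq_add_of_eq_zero _ m fun k hk => by rw [hbz _ k (by omega), zero_mul],
        hb1', hb0 (m + 2) (by omega)]
      exact bdf2_exact_on_linear (hτ _ (by omega)) (hτ _ (by omega)) (hr (m + 2) (by omega))
  intro n _
  have dcc : ∀ k ∈ Icc 1 n, ∑ j ∈ Icc k n, p n j * b j k = 1 := fun k hk =>
    hp k n (mem_Icc.mp hk).1 (mem_Icc.mp hk).2
  rw [← sum_mul_sum_Icc_eq_sum_of_dcc b (p n) τ n dcc]
  exact sum_congr rfl fun j hj => by rw [bdf2_time j (mem_Icc.mp hj).1, mul_one]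
end

section
/- Under the hypotheses of (4.47), if |Φ''(s)| ≤ M for all s ∈ [tₙ₋₂, tₙ] and rₙ ≤ r_max, τₙ₋₁, τₙ ≤ τ, then |BΦ(tₙ₋₁) − Φ(tₙ)| ≤ (1 + 5 r_max) τ² M. -/
/-- Quadratic Taylor-type bound: if `|f''| ≤ M` on `[a,b]`, then for `x, y ∈ [a,b]`,
`|f y - f x - f' x * (y - x)| ≤ M * (y - x)^2`. -/
lemma quad_taylor_bound (f : ℝ → ℝ) (hf : ContDiff ℝ 2 f) {a b : ℝ} (M : ℝ)
    (hM : ∀ s ∈ Set.Icc a b, |deriv (deriv f) s| ≤ M) {x y : ℝ}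
    (hx : x ∈ Set.Icc a b) (hy : y ∈ Set.Icc a b) :
    |f y - f x - deriv f x * (y - x)| ≤ M * (y - x) ^ 2 := by
  have hM0 : 0 ≤ M := le_trans (abs_nonneg _) (hM x hx)
  have hsub : Set.uIcc x y ⊆ Set.Icc a b := by
    exact Set.uIcc_subset_Icc hx hy
  have hf1 : ContDiff ℝ 1 (deriv f) := (contDiff_succ_iff_deriv.mp (by exact_mod_cast hf)).2.2
  have hdf : Differentiable ℝ f := hf.differentiable (by norm_num)
  -- Lipschitz bound on `deriv f`
  have key : ∀ s ∈ Set.uIcc x y, |deriv f s - deriv f x| ≤ M * |y - x| := by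
    intro s hs
    have h1 : |deriv f s - deriv f x| ≤ M * |s - x| := by
      have := Convex.norm_image_sub_le_of_norm_deriv_le
        (f := deriv f) (C := M) (s := Set.uIcc x y)
        (fun t _ => (hf1.differentiable (by norm_num) t))
        (fun t ht => hM t (hsub ht)) (convex_uIcc x y) (Set.left_mem_uIcc) hs
      simpa [Real.norm_eq_abs] using this
    have h2 : |s - x| ≤ |y - x| := by
      rcases Set.mem_uIcc.mp hs with ⟨h3, h4⟩ | ⟨h3, h4⟩ <;>
        rw [abs_sub_le_iff] <;> constructor <;>
        cases' le_total x y with h5 h5 <;>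
        simp [abs_of_nonneg, abs_of_nonpos, sub_nonneg, sub_nonpos, h5] <;> linarith
    calc |deriv f s - deriv f x| ≤ M * |s - x| := h1
      _ ≤ M * |y - x| := by exact mul_le_mul_of_nonneg_left h2 hM0
  -- derivative of the remainder function
  have hd : ∀ s : ℝ, HasDerivAt (fun t => f t - f x - deriv f x * (t - x))
      (deriv f s - deriv f x) s := by
    intro s
    have h1 : HasDerivAt f (deriv f s) s := (hdf s).hasDerivAt
    have h2 : HasDerivAt (fun t : ℝ => deriv f x * (t - x)) (deriv f x) s := by
      simpa using ((hasDerivAt_id s).sub_const x).const_mul (deriv f x)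
    exact (h1.sub_const (f x)).sub h2
  have main := Convex.norm_image_sub_le_of_norm_hasDerivWithin_le
    (f := fun t => f t - f x - deriv f x * (t - x))
    (f' := fun s => deriv f s - deriv f x) (C := M * |y - x|) (s := Set.uIcc x y)
    (fun s _ => (hd s).hasDerivWithinAt)
    (fun s hs => by simpa [Real.norm_eq_abs] using key s hs)
    (convex_uIcc x y) Set.left_mem_uIcc Set.right_mem_uIcc
  have : |f y - f x - deriv f x * (y - x)| ≤ M * |y - x| * |y - x| := by
    simpa [Real.norm_eq_abs] using main
  calc |f y - f x - deriv f x * (y - x)| ≤ M * |y - x| * |y - x| := this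
    _ = M * (y - x) ^ 2 := by rw [mul_assoc, ← abs_mul, ← sq, abs_sq]

/-- Scalar version of the consistency bound (4.48) for the second-order
extrapolation operator. -/
theorem extrapolation_bound (Φ : ℝ → ℝ) (hΦ : ContDiff ℝ 2 Φ)
    (t₀ t₁ t₂ : ℝ) (h01 : t₀ < t₁) (h12 : t₁ < t₂)
    (r rmax τ M : ℝ) (hr : r = (t₂ - t₁) / (t₁ - t₀)) (hrmax : r ≤ rmax)
    (hτ1 : t₁ - t₀ ≤ τ) (hτ2 : t₂ - t₁ ≤ τ)
    (hM : ∀ s ∈ Set.Icc t₀ t₂, |deriv (deriv Φ) s| ≤ M) :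
    |(1 + r) * Φ t₁ - r * Φ t₀ - Φ t₂| ≤ (1 + 5 * rmax) * τ ^ 2 * M := by
  have h02 : t₀ ≤ t₂ := le_of_lt (h01.trans h12)
  have ht1 : t₁ ∈ Set.Icc t₀ t₂ := ⟨le_of_lt h01, le_of_lt h12⟩
  have ht0 : t₀ ∈ Set.Icc t₀ t₂ := Set.left_mem_Icc.mpr h02
  have ht2 : t₂ ∈ Set.Icc t₀ t₂ := Set.right_mem_Icc.mpr h02
  have hM0 : 0 ≤ M := le_trans (abs_nonneg _) (hM t₁ ht1)
  have hE0 := quad_taylor_bound Φ hΦ M hM ht1 ht0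
  have hE2 := quad_taylor_bound Φ hΦ M hM ht1 ht2
  have hden : t₁ - t₀ > 0 := by linarith
  have hrpos : 0 < r := by rw [hr]; exact div_pos (by linarith) (by linarith)
  have hreq : r * (t₁ - t₀) = t₂ - t₁ := by
    rw [hr]; field_simp
  -- algebraic identity
  have hkey : (1 + r) * Φ t₁ - r * Φ t₀ - Φ t₂ =
      -(r * (Φ t₀ - Φ t₁ - deriv Φ t₁ * (t₀ - t₁)))
      - (Φ t₂ - Φ t₁ - deriv Φ t₁ * (t₂ - t₁)) := by
    linear_combination (deriv Φ t₁) * hreq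
  have hτ0 : 0 < τ := lt_of_lt_of_le hden hτ1
  have hsq1 : (t₀ - t₁) ^ 2 ≤ τ ^ 2 := by nlinarith
  have hsq2 : (t₂ - t₁) ^ 2 ≤ τ ^ 2 := by nlinarith
  calc |(1 + r) * Φ t₁ - r * Φ t₀ - Φ t₂|
      ≤ r * |Φ t₀ - Φ t₁ - deriv Φ t₁ * (t₀ - t₁)|
        + |Φ t₂ - Φ t₁ - deriv Φ t₁ * (t₂ - t₁)| := by
        rw [hkey]
        refine le_trans (abs_sub _ _) ?_
        rw [abs_neg, abs_mul, abs_of_pos hrpos]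
    _ ≤ r * (M * (t₀ - t₁) ^ 2) + M * (t₂ - t₁) ^ 2 := by
        gcongr
    _ ≤ (1 + 5 * rmax) * τ ^ 2 * M := by nlinarith [mul_le_mul_of_nonneg_left hsq1 (mul_nonneg hrpos.le hM0), mul_le_mul_of_nonneg_left hsq2 hM0, mul_nonneg hM0 (sq_nonneg τ), hrpos.le, hrmax]
end
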